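/- arXiv:1811.06749 — 2 statements merged into one kernel-verified Lean document; each statement's English description precedes it below -/
import Mathlib

section
/- Let $a_1,\dots,a_n$ be integers with $-i \leq a_i \leq n-i$ and $\sum_{i=1}^n \log_2 \max(|a_i|,1) = m$. Then there exist sequences of natural numbers $(w_i)_{i=1}^n$ and integers $(b_i)_{i=1}^n$ such that for all $i$: $w_i \geq 2\log_2 \max(|b_i|,1) + 1$, $P(i) + b_i \cdot \mathrm{sign} = P(i + a_i)$ where $P(j) = \sum_{l=1}^{j-1} w_l$ (i.e., $b_i$ equals the signed bit-distance from position $i$ to position $i+a_i$), and $\sum_{i=1}^n w_i = O(m + n)$. -/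
open Real Finset

/-!
Write `k_i ≈ log₂ |a_i|` (`offsetLen`) for the bit length of the `i`-th offset. The bit-offset
`b_i` spans the `|a_i| < 2^{k_i}` widths between `i` and `i + a_i`, so `w_i` must be about
`2 log₂ |b_i|`, i.e. about `k_i` plus the logarithm of the largest width in that span. Let every
position `l` raise the width of each position `i` by `A_l - log₂ |i - l|` bits, where
`A_l ≈ log₂ k_l` (`reach`), and take `e_i` (`excess`) to be the largest of these demands. Then
`e_l ≤ e_i + log₂ |i - l| + 1`, hence every width within distance `2^{k_i}` of `i` is at most
`2^{k_i + e_i + O(1)}`, which is what the gamma code of `b_i` needs. The demands of a single `l`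
sum over all `i` to `O(2^{A_l}) = O(k_l)`, so `∑ e_i = O(∑ k_i)`.
-/

namespace Finset

theorem sum_tsub_eq_sum_card_filter_le {ι : Type*} (s : Finset ι) (f : ι → ℕ) (A : ℕ) :
    ∑ i ∈ s, (A - f i) = ∑ j ∈ range A, #{i ∈ s | f i ≤ j} := by
  simp only [card_filter]
  rw [sum_comm]
  refine sum_congr rfl fun i _ => ?_
  have hIco : {j ∈ range A | f i ≤ j} = Ico (f i) A := by
    ext j
    simp only [mem_filter, mem_range, mem_Ico]
    omega
  rw [← card_filter, hIco, Nat.card_Ico]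

theorem abs_sum_range_sub_sum_range_le (w : ℕ → ℕ) (i q B : ℕ)
    (hB : ∀ l, min i q ≤ l → l < max i q → w l ≤ B) :
    |(∑ l ∈ range q, (w l : ℤ)) - ∑ l ∈ range i, (w l : ℤ)| ≤ Nat.dist i q * B := by
  wlog hiq : i ≤ q generalizing i q
  · rw [abs_sub_comm, Nat.dist_comm]
    exact this q i (fun l h₁ h₂ => hB l (by omega) (by omega)) (by omega)
  rw [← sum_Ico_eq_sub _ hiq, abs_of_nonneg (sum_nonneg fun _ _ => by positivity),
    Nat.dist_eq_sub_of_le hiq]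
  calc ∑ l ∈ Ico i q, (w l : ℤ) ≤ #(Ico i q) • (B : ℤ) :=
        sum_le_card_nsmul _ _ _ fun l hl => by
          rw [mem_Ico] at hl
          exact_mod_cast hB l (by omega) (by omega)
    _ = ((q - i : ℕ) : ℤ) * B := by rw [Nat.card_Ico, nsmul_eq_mul]

end Finset

namespace Nat

theorem card_filter_dist_lt_le (n l r : ℕ) : #{i ∈ range n | Nat.dist i l < r} ≤ 2 * r := by
  calc #{i ∈ range n | Nat.dist i l < r}
      ≤ #(Ico (l + 1 - r) (l + r)) := by
        refine card_le_card fun i hi => ?_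
        rw [mem_filter, mem_range] at hi
        unfold Nat.dist at hi
        rw [mem_Ico]
        omega
    _ ≤ 2 * r := by
        rw [Nat.card_Ico]
        omega

theorem sum_tsub_log_dist_le (A n l : ℕ) :
    ∑ i ∈ range n, (A - Nat.log 2 (Nat.dist i l)) ≤ 2 ^ (A + 2) := by
  rw [sum_tsub_eq_sum_card_filter_le]
  calc ∑ j ∈ range A, #{i ∈ range n | Nat.log 2 (Nat.dist i l) ≤ j}
      ≤ ∑ j ∈ range A, #{i ∈ range n | Nat.dist i l < 2 ^ (j + 1)} := by
        refine sum_le_sum fun j _ => card_le_card fun i hi => ?_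
        rw [mem_filter] at hi ⊢
        exact ⟨hi.1, (Nat.lt_pow_succ_log_self one_lt_two _).trans_le
          (Nat.pow_le_pow_right two_pos (Nat.succ_le_succ hi.2))⟩
    _ ≤ ∑ j ∈ range A, 4 * 2 ^ j := by
        refine sum_le_sum fun j _ => (card_filter_dist_lt_le n l _).trans_eq ?_
        ring
    _ ≤ 2 ^ (A + 2) := by
        rw [← mul_sum, pow_add, mul_comm]
        have := Nat.geomSum_lt le_rfl (s := range A) (n := A) fun k hk => mem_range.mp hk
        omega

theorem log_two_add_le (x y : ℕ) : Nat.log 2 (x + y) ≤ max (Nat.log 2 x) (Nat.log 2 y) + 1 := by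
  rcases Nat.eq_zero_or_pos (x + y) with h | h
  · simp [h]
  refine Nat.le_of_lt_succ (Nat.log_lt_of_lt_pow h.ne' ?_)
  have hx := (Nat.lt_pow_succ_log_self one_lt_two x).trans_le
    (Nat.pow_le_pow_right two_pos (Nat.succ_le_succ (le_max_left (Nat.log 2 x) (Nat.log 2 y))))
  have hy := (Nat.lt_pow_succ_log_self one_lt_two y).trans_le
    (Nat.pow_le_pow_right two_pos (Nat.succ_le_succ (le_max_right (Nat.log 2 x) (Nat.log 2 y))))
  rw [pow_succ 2 (_ + 1)]
  omega

theorem log_two_dist_le (i l l' : ℕ) :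
    Nat.log 2 (Nat.dist i l') ≤ Nat.log 2 (Nat.dist i l) + Nat.log 2 (Nat.dist l l') + 1 :=
  calc Nat.log 2 (Nat.dist i l')
      ≤ Nat.log 2 (Nat.dist i l + Nat.dist l l') :=
        Nat.log_mono_right (Nat.dist.triangle_inequality i l l')
    _ ≤ max (Nat.log 2 (Nat.dist i l)) (Nat.log 2 (Nat.dist l l')) + 1 := log_two_add_le _ _
    _ ≤ _ := by omega

end Nat

theorem Real.logb_two_max_abs_one_le {x : ℝ} {h : ℕ} (hx : |x| ≤ 2 ^ h) :
    logb 2 (max |x| 1) ≤ h := by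
  have hpos : 0 < max |x| 1 := lt_max_of_lt_right one_pos
  calc logb 2 (max |x| 1) ≤ logb 2 (2 ^ h) :=
        logb_le_logb_of_le one_lt_two hpos (max_le hx (one_le_pow₀ one_le_two))
    _ = h := by rw [logb_pow, logb_self_eq_one one_lt_two, mul_one]

theorem Int.log_two_natAbs_le_logb (z : ℤ) :
    (Nat.log 2 z.natAbs : ℝ) ≤ logb 2 (max |(z : ℝ)| 1) := by
  have hmax : ((max z.natAbs 1 : ℕ) : ℝ) = max |(z : ℝ)| 1 := by
    rw [Nat.cast_max, Nat.cast_natAbs, Int.cast_abs, Nat.cast_one]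
  have hlog : Nat.log 2 z.natAbs = Nat.log 2 (max z.natAbs 1) := by
    rcases Nat.eq_zero_or_pos z.natAbs with h | h
    · simp [h]
    · rw [max_eq_left h]
  rw [hlog, ← hmax]
  exact_mod_cast Real.natLog_le_logb _ 2

namespace BitOffset

variable (n : ℕ) (a : ℕ → ℤ)

def offsetLen (i : ℕ) : ℕ := Nat.log 2 (a i).natAbs + 1

def reach (l : ℕ) : ℕ := Nat.log 2 (offsetLen a l) + 2

def demand (i l : ℕ) : ℕ := reach a l - Nat.log 2 (Nat.dist i l)

def excess (i : ℕ) : ℕ := (range n).sup (demand a i)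

def width (i : ℕ) : ℕ := 8 * (offsetLen a i + excess n a i + 4)

theorem natAbs_lt_two_pow_offsetLen (i : ℕ) : (a i).natAbs < 2 ^ offsetLen a i :=
  Nat.lt_pow_succ_log_self one_lt_two _

theorem offsetLen_add_two_le_two_pow_reach (l : ℕ) : offsetLen a l + 2 ≤ 2 ^ reach a l := by
  have h := Nat.lt_pow_succ_log_self one_lt_two (offsetLen a l)
  rw [reach, pow_succ]
  omega

theorem two_pow_reach_le (l : ℕ) : 2 ^ reach a l ≤ 4 * offsetLen a l := by
  rw [reach, pow_add, mul_comm]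
  exact Nat.mul_le_mul_left 4 (Nat.pow_log_le_self 2 (Nat.succ_ne_zero _))

variable {n} in
theorem reach_le_excess_add {l : ℕ} (hl : l < n) (i : ℕ) :
    reach a l ≤ excess n a i + Nat.log 2 (Nat.dist i l) := by
  have : demand a i l ≤ excess n a i := le_sup (mem_range.mpr hl)
  rw [demand] at this
  omega

theorem excess_le_excess_add (i l : ℕ) :
    excess n a l ≤ excess n a i + Nat.log 2 (Nat.dist i l) + 1 := by
  refine Finset.sup_le fun l' hl' => ?_
  have h₁ := reach_le_excess_add a (mem_range.mp hl') i
  have h₂ := Nat.log_two_dist_le i l l'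
  rw [demand]
  omega

variable {n} in
theorem width_le {l : ℕ} (hl : l < n) (i : ℕ) :
    width n a l ≤ 2 ^ (excess n a i + Nat.log 2 (Nat.dist i l) + 5) := by
  set u := excess n a i + Nat.log 2 (Nat.dist i l)
  have hk : offsetLen a l + 2 ≤ 2 ^ u :=
    (offsetLen_add_two_le_two_pow_reach a l).trans
      (Nat.pow_le_pow_right two_pos (reach_le_excess_add a hl i))
  have he := excess_le_excess_add n a i l
  have hu : u < 2 ^ u := Nat.lt_two_pow_self
  rw [width, pow_add]
  omega

variable {n a} in
theorem abs_bitOffset_le {i : ℕ} (hi : i < n) (ha : 0 ≤ (i : ℤ) + a i)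
    (ha' : (i : ℤ) + a i < n) :
    |(∑ l ∈ range (i + a i).toNat, (width n a l : ℤ)) - ∑ l ∈ range i, (width n a l : ℤ)| ≤
      2 ^ (2 * offsetLen a i + excess n a i + 4) := by
  set q := (i + a i).toNat
  have hdist : Nat.dist i q = (a i).natAbs := by
    unfold Nat.dist; omega
  have hk := natAbs_lt_two_pow_offsetLen a i
  have hwidth (l : ℕ) (h₁ : min i q ≤ l) (h₂ : l < max i q) :
      width n a l ≤ 2 ^ (excess n a i + offsetLen a i + 4) := by
    refine (width_le a (by omega) i).trans (Nat.pow_le_pow_right two_pos ?_)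
    have : Nat.log 2 (Nat.dist i l) < offsetLen a i :=
      Nat.log_lt_of_lt_pow' (by unfold offsetLen; omega) (by unfold Nat.dist at hdist ⊢; omega)
    omega
  refine (abs_sum_range_sub_sum_range_le _ i q _ hwidth).trans ?_
  have hprod : (a i).natAbs * 2 ^ (excess n a i + offsetLen a i + 4) ≤
      2 ^ (2 * offsetLen a i + excess n a i + 4) :=
    calc (a i).natAbs * 2 ^ (excess n a i + offsetLen a i + 4)
        ≤ 2 ^ offsetLen a i * 2 ^ (excess n a i + offsetLen a i + 4) :=
          Nat.mul_le_mul_right _ hk.le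
      _ = 2 ^ (2 * offsetLen a i + excess n a i + 4) := by ring
  rw [hdist]
  exact_mod_cast hprod

variable {n a} in
theorem two_mul_logb_bitOffset_add_one_le_width {i : ℕ} (hi : i < n)
    (ha : 0 ≤ (i : ℤ) + a i) (ha' : (i : ℤ) + a i < n) :
    2 * logb 2 (max |(((∑ l ∈ range (i + a i).toNat, (width n a l : ℤ)) -
      ∑ l ∈ range i, (width n a l : ℤ) : ℤ) : ℝ)| 1) + 1 ≤ width n a i := by
  have hlog := Real.logb_two_max_abs_one_le (h := 2 * offsetLen a i + excess n a i + 4)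
    (by rw [← Int.cast_abs]; exact_mod_cast abs_bitOffset_le hi ha ha')
  rw [width]
  push_cast at hlog ⊢
  linarith [(offsetLen a i).cast_nonneg (α := ℝ), (excess n a i).cast_nonneg (α := ℝ)]

theorem sum_excess_le : ∑ i ∈ range n, excess n a i ≤ 16 * ∑ l ∈ range n, offsetLen a l :=
  calc ∑ i ∈ range n, excess n a i
      ≤ ∑ i ∈ range n, ∑ l ∈ range n, demand a i l :=
        sum_le_sum fun i _ => Finset.sup_le fun l hl => single_le_sum (by simp) hl
    _ = ∑ l ∈ range n, ∑ i ∈ range n, demand a i l := sum_comm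
    _ ≤ ∑ l ∈ range n, 16 * offsetLen a l := sum_le_sum fun l _ => by
        have h₁ := Nat.sum_tsub_log_dist_le (reach a l) n l
        have h₂ := two_pow_reach_le a l
        simp only [demand, pow_add] at h₁ ⊢
        omega
    _ = 16 * ∑ l ∈ range n, offsetLen a l := (mul_sum ..).symm

theorem sum_width_le :
    ∑ i ∈ range n, width n a i ≤ 136 * ∑ i ∈ range n, offsetLen a i + 32 * n := by
  have hsum : ∑ i ∈ range n, width n a i =
      8 * ∑ i ∈ range n, offsetLen a i + 8 * ∑ i ∈ range n, excess n a i + 32 * n := by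
    simp only [width, mul_add, sum_add_distrib, ← mul_sum, sum_const, card_range, smul_eq_mul]
    ring
  have := sum_excess_le n a
  omega

theorem sum_offsetLen_le :
    ∑ i ∈ range n, (offsetLen a i : ℝ) ≤ ∑ i ∈ range n, logb 2 (max |(a i : ℝ)| 1) + n := by
  calc ∑ i ∈ range n, (offsetLen a i : ℝ)
      ≤ ∑ i ∈ range n, (logb 2 (max |(a i : ℝ)| 1) + 1) := sum_le_sum fun i _ => by
        rw [offsetLen, Nat.cast_succ]
        linarith [Int.log_two_natAbs_le_logb (a i)]
    _ = _ := by rw [sum_add_distrib, sum_const, card_range, nsmul_one]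

end BitOffset

open BitOffset

/-- Bit-offset expansion theorem: offsets `a i` (0-based, with target
index `i + a i` in `[0, n-1]`) of total log-magnitude `m` can be
expanded to self-referential bit-offsets `b i` (the signed bit-distance
`P(i + a i) - P(i)` where `P j = ∑_{l < j} w l`), each gamma-encodable
within its width (`w i ≥ 2 log₂|b i| + 1`), with total width
`∑ w i = O(m + n)`. -/
theorem stmt15 :
    ∃ C : ℝ, 0 < C ∧ ∀ (n : ℕ) (a : ℕ → ℤ),
      (∀ i < n, -(i : ℤ) ≤ a i ∧ a i ≤ (n : ℤ) - (i : ℤ) - 1) →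
      ∃ (w : ℕ → ℕ) (b : ℕ → ℤ),
        (∀ i < n, 2 * Real.logb 2 (max |(b i : ℝ)| 1) + 1 ≤ (w i : ℝ)) ∧
        (∀ i < n, b i =
          (∑ l ∈ Finset.range ((i + a i).toNat), (w l : ℤ)) -
          (∑ l ∈ Finset.range i, (w l : ℤ))) ∧
        (∑ i ∈ Finset.range n, (w i : ℝ)) ≤
          C * ((∑ i ∈ Finset.range n, Real.logb 2 (max |(a i : ℝ)| 1))
            + (n : ℝ)) := by
  refine ⟨168, by norm_num, fun n a ha => ⟨width n a, fun i =>
    (∑ l ∈ range (i + a i).toNat, (width n a l : ℤ)) - ∑ l ∈ range i, (width n a l : ℤ),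
    fun i hi => ?_, fun i _ => rfl, ?_⟩⟩
  · exact two_mul_logb_bitOffset_add_one_le_width hi (by linarith [ha i hi])
      (by linarith [ha i hi])
  · have hnat : (∑ i ∈ range n, (width n a i : ℝ)) ≤
        136 * ∑ i ∈ range n, (offsetLen a i : ℝ) + 32 * n := by
      exact_mod_cast sum_width_le n a
    have hm : 0 ≤ ∑ i ∈ range n, logb 2 (max |(a i : ℝ)| 1) :=
      sum_nonneg fun i _ => logb_nonneg one_lt_two (le_max_right _ _)
    linarith [sum_offsetLen_le n a]
end

section
/- There exists a weighted graph $G$ satisfying the $n^c$ edge separator theorem with respect to its edge weights, together with a recursive separator partition $P$ of $G$ with average region size $\Theta(n/\log n)$, such that the total weight of edges not contained inside any region of $P$ is $\Theta(W)$, where $W$ is the total edge weight. Hence the bound $O(W/\bar r^{1-c})$ with $\bar r$ the average region size fails for weighted graphs. -/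
open Real Finset

variable {V : Type} [Fintype V] [DecidableEq V]

/-- Total weight of edges between vertex sets `A` and `B`. -/
noncomputable def cutW (w : V → V → ℝ) (A B : Finset V) : ℝ :=
  ∑ a ∈ A, ∑ b ∈ B, w a b

/-- Total weight of edges inside `U` (each unordered pair counted once). -/
noncomputable def totW (w : V → V → ℝ) (U : Finset V) : ℝ :=
  (∑ a ∈ U, ∑ b ∈ U, w a b) / 2

/-- The weighted `n^c` edge separator theorem holds for `w` (with
balance `α` and constant `β`) on every induced subgraph. -/
def SepThm (w : V → V → ℝ) (c α β : ℝ) : Prop :=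
  ∀ U : Finset V, 2 ≤ U.card →
    ∃ A B : Finset V, A ∪ B = U ∧ Disjoint A B ∧ A.Nonempty ∧ B.Nonempty ∧
      (A.card : ℝ) ≤ α * U.card ∧ (B.card : ℝ) ≤ α * U.card ∧
      cutW w A B ≤ β * totW w U / (U.card : ℝ) ^ (1 - c)

/-- `RecSep w c α β U P`: `P` is a recursive separator partition of `U`,
obtained by recursively splitting via balanced separators of weight at
most `β · W_U / |U|^(1-c)`. -/
inductive RecSep (w : V → V → ℝ) (c α β : ℝ) :
    Finset V → Finset (Finset V) → Prop
  | single (U : Finset V) : RecSep w c α β U {U}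
  | split (U A B : Finset V) (PA PB : Finset (Finset V)) :
      A ∪ B = U → Disjoint A B → A.Nonempty → B.Nonempty →
      (A.card : ℝ) ≤ α * U.card → (B.card : ℝ) ≤ α * U.card →
      cutW w A B ≤ β * totW w U / (U.card : ℝ) ^ (1 - c) →
      RecSep w c α β A PA → RecSep w c α β B PB →
      RecSep w c α β U (PA ∪ PB)

/-!
Put all the weight on a single edge `uv`. A balanced split of a vertex set that keeps `u` and `v`
on the same side costs nothing, and cutting `uv` inside a two-element set is within the budget
`β W_U / |U|^(1-c)` for `c = 1/2`, `β = 2`; hence the separator theorem holds. Halving `2^k`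
vertices while keeping `u, v` together, until they form a two-element set that is finally split,
is a recursive separator partition with at most `k + 1` regions, and all of the weight `W = 1`
lies between regions. Since `2^k / (k + 1) → ∞`, this beats every bound `C W / r̄^(1-c)`.
-/

set_option linter.unusedSectionVars false

open Filter Topology in
lemma exists_mul_succ_lt_two_pow (x : ℝ) : ∃ k : ℕ, 1 ≤ k ∧ x * (k + 1) < 2 ^ k := by
  have h : Tendsto (fun k : ℕ ↦ x * (((k + 1 : ℕ) : ℝ) ^ 1 / 2 ^ (k + 1))) atTop (𝓝 0) := by
    simpa using ((tendsto_add_atTop_iff_nat 1).2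
      (tendsto_pow_const_div_const_pow_of_one_lt 1 one_lt_two)).const_mul x
  obtain ⟨k, hk, hk1⟩ :=
    ((h.eventually (gt_mem_nhds one_half_pos)).and (eventually_ge_atTop 1)).exists
  refine ⟨k, hk1, ?_⟩
  push_cast at hk
  rw [pow_one, ← mul_div_assoc, div_lt_iff₀ (by positivity), pow_succ] at hk
  linarith

lemma Finset.sum_sum_ite_and_eq {X M : Type*} [DecidableEq X] [AddCommMonoid M]
    (A B : Finset X) (x y : X) (m : M) :
    ∑ a ∈ A, ∑ b ∈ B, (if a = x ∧ b = y then m else 0) = if x ∈ A ∧ y ∈ B then m else 0 := by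
  simp [ite_and, sum_ite_eq', sum_ite_irrel]

lemma Finset.exists_pair_mem_subset_card_eq_half {X : Type*} [DecidableEq X] {U : Finset X}
    {u v : X} (hu : u ∈ U) (hv : v ∈ U) (hU : 3 ≤ #U) :
    ∃ A ⊆ U, u ∈ A ∧ v ∈ A ∧ #A = (#U + 1) / 2 := by
  obtain ⟨A, huvA, hAU, hA⟩ := exists_subsuperset_card_eq (s := {u, v})
    (insert_subset hu (singleton_subset_iff.2 hv))
    (by have := card_le_two (a := u) (b := v); omega) (by omega : (#U + 1) / 2 ≤ #U)
  exact ⟨A, hAU, huvA (mem_insert_self u {v}),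
    huvA (mem_insert_of_mem (mem_singleton_self v)), hA⟩

/-- One splitting step, as in `SepThm` and in `RecSep.split`. -/
def IsBalancedSep (w : V → V → ℝ) (c α β : ℝ) (U A B : Finset V) : Prop :=
  A ∪ B = U ∧ Disjoint A B ∧ A.Nonempty ∧ B.Nonempty ∧
    (A.card : ℝ) ≤ α * U.card ∧ (B.card : ℝ) ≤ α * U.card ∧
    cutW w A B ≤ β * totW w U / (U.card : ℝ) ^ (1 - c)

section

variable {w : V → V → ℝ} {c α β : ℝ} {U A B : Finset V} {P PA PB : Finset (Finset V)}

lemma RecSep.split_of_isBalancedSep (h : IsBalancedSep w c α β U A B)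
    (hA : RecSep w c α β A PA) (hB : RecSep w c α β B PB) : RecSep w c α β U (PA ∪ PB) :=
  let ⟨hU, hAB, hAne, hBne, hAcard, hBcard, hcut⟩ := h
  .split U A B PA PB hU hAB hAne hBne hAcard hBcard hcut hA hB

lemma RecSep.nonempty (h : RecSep w c α β U P) : P.Nonempty := by
  induction h with
  | single U => exact singleton_nonempty U
  | split _ _ _ _ _ _ _ _ _ _ _ _ _ _ ihA _ => exact ihA.mono subset_union_left

lemma isBalancedSep_sdiff_of_card_eq_half (hAU : A ⊆ U) (hA : #A = (#U + 1) / 2)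
    (hU : 2 ≤ #U) (hcut : cutW w A (U \ A) ≤ β * totW w U / (#U : ℝ) ^ (1 - c)) :
    IsBalancedSep w c (2 / 3) β U A (U \ A) := by
  have hB : #(U \ A) = #U - (#U + 1) / 2 := by rw [card_sdiff_of_subset hAU, hA]
  refine ⟨union_sdiff_of_subset hAU, disjoint_sdiff, ?_, ?_, ?_, ?_, hcut⟩
  · rw [← card_pos]; omega
  · rw [← card_pos]; omega
  · rw [hA]
    have : 3 * ((#U + 1) / 2) ≤ 2 * #U := by omega
    have := (Nat.cast_le (α := ℝ)).mpr this; push_cast at this; linarith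
  · rw [hB]
    have : 3 * (#U - (#U + 1) / 2) ≤ 2 * #U := by omega
    have := (Nat.cast_le (α := ℝ)).mpr this; push_cast at this; linarith

end

def edgeWeight (u v : V) (a b : V) : ℝ :=
  (if a = u ∧ b = v then 1 else 0) + (if a = v ∧ b = u then 1 else 0)

section

variable (u v : V)

lemma edgeWeight_comm (a b : V) : edgeWeight u v a b = edgeWeight u v b a := by
  simp only [edgeWeight, and_comm, add_comm]

lemma edgeWeight_nonneg (a b : V) : 0 ≤ edgeWeight u v a b := by
  unfold edgeWeight; positivity

lemma cutW_edgeWeight (A B : Finset V) :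
    cutW (edgeWeight u v) A B =
      (if u ∈ A ∧ v ∈ B then 1 else 0) + (if v ∈ A ∧ u ∈ B then 1 else 0) := by
  simp only [cutW, edgeWeight, sum_add_distrib, sum_sum_ite_and_eq]

lemma totW_edgeWeight (U : Finset V) :
    totW (edgeWeight u v) U = if u ∈ U ∧ v ∈ U then 1 else 0 := by
  change cutW _ U U / 2 = _
  simp only [cutW_edgeWeight, and_comm (a := v ∈ U)]
  split_ifs <;> norm_num

variable {u v}

lemma isBalancedSep_edgeWeight_of_card_eq_two (huv : u ≠ v) {U : Finset V} (hu : u ∈ U)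
    (hv : v ∈ U) (hU : #U = 2) :
    IsBalancedSep (edgeWeight u v) (1 / 2) (2 / 3) 2 U {u} (U \ {u}) := by
  refine isBalancedSep_sdiff_of_card_eq_half (singleton_subset_iff.2 hu) (by simp [hU])
    hU.ge ?_
  have hsqrt : (2 : ℝ) ^ (1 - 1 / 2 : ℝ) ≤ 2 := by
    simpa using Real.rpow_le_rpow_of_exponent_le one_le_two (by norm_num : (1 - 1 / 2 : ℝ) ≤ 1)
  rw [cutW_edgeWeight, totW_edgeWeight,
    if_pos ⟨mem_singleton_self u, mem_sdiff.2 ⟨hv, by simpa using huv.symm⟩⟩,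
    if_neg (by simp [huv.symm]), if_pos ⟨hu, hv⟩, hU, le_div_iff₀ (by positivity)]
  push_cast
  linarith

lemma isBalancedSep_edgeWeight_of_cutW_eq_zero {U A : Finset V} (hAU : A ⊆ U)
    (hA : #A = (#U + 1) / 2) (hU : 2 ≤ #U) (hcut : cutW (edgeWeight u v) A (U \ A) = 0) :
    IsBalancedSep (edgeWeight u v) (1 / 2) (2 / 3) 2 U A (U \ A) := by
  refine isBalancedSep_sdiff_of_card_eq_half hAU hA hU ?_
  rw [hcut, totW_edgeWeight]
  positivity

lemma sepThm_edgeWeight (huv : u ≠ v) : SepThm (edgeWeight u v) (1 / 2) (2 / 3) 2 := by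
  intro U hU
  by_cases hedge : u ∈ U ∧ v ∈ U
  · obtain hU2 | hU3 := hU.eq_or_lt
    · exact ⟨_, _, isBalancedSep_edgeWeight_of_card_eq_two huv hedge.1 hedge.2 hU2.symm⟩
    obtain ⟨A, hAU, hu, hv, hA⟩ := exists_pair_mem_subset_card_eq_half hedge.1 hedge.2 hU3
    exact ⟨_, _, isBalancedSep_edgeWeight_of_cutW_eq_zero hAU hA hU
      (by simp [cutW_edgeWeight, hu, hv])⟩
  · obtain ⟨A, hAU, hA⟩ := exists_subset_card_eq (by omega : (#U + 1) / 2 ≤ #U)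
    refine ⟨_, _, isBalancedSep_edgeWeight_of_cutW_eq_zero hAU hA hU ?_⟩
    rw [cutW_edgeWeight, if_neg, if_neg, add_zero]
    · exact fun h ↦ hedge ⟨(mem_sdiff.1 h.2).1, hAU h.1⟩
    · exact fun h ↦ hedge ⟨hAU h.1, (mem_sdiff.1 h.2).1⟩

lemma exists_recSep_edgeWeight (huv : u ≠ v) (U : Finset V) (hu : u ∈ U) (hv : v ∈ U) :
    ∃ P, RecSep (edgeWeight u v) (1 / 2) (2 / 3) 2 U P ∧ #P ≤ Nat.clog 2 #U + 1 ∧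
      ∀ p ∈ P, ¬(u ∈ p ∧ v ∈ p) := by
  induction U using Finset.strongInduction with
  | H U ih =>
  have hU : 2 ≤ #U := by
    simpa [huv] using card_le_card (insert_subset hu (singleton_subset_iff.2 hv))
  obtain hU2 | hU3 := hU.eq_or_lt
  · refine ⟨{{u}} ∪ {U \ {u}}, .split_of_isBalancedSep
      (isBalancedSep_edgeWeight_of_card_eq_two huv hu hv hU2.symm) (.single _) (.single _),
      ?_, ?_⟩
    · have := Nat.clog_pos one_lt_two one_lt_two
      grw [card_union_le, ← hU2]
      simpa
    · simp only [mem_union, mem_singleton]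
      rintro p (rfl | rfl) ⟨hup, hvp⟩
      exacts [huv.symm (mem_singleton.1 hvp), (mem_sdiff.1 hup).2 (mem_singleton_self u)]
  obtain ⟨A, hAU, huA, hvA, hA⟩ := exists_pair_mem_subset_card_eq_half hu hv hU3
  obtain ⟨PA, hPA, hPAcard, hPAsep⟩ :=
    ih A (ssubset_of_subset_of_ne hAU (by rintro rfl; omega)) huA hvA
  refine ⟨PA ∪ {U \ A}, .split_of_isBalancedSep
    (isBalancedSep_edgeWeight_of_cutW_eq_zero hAU hA hU (by simp [cutW_edgeWeight, huA, hvA]))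
    hPA (.single _), ?_, ?_⟩
  · grw [card_union_le, hPAcard, Nat.clog_of_two_le one_lt_two hU, hA]
    simp
  · simp only [mem_union, mem_singleton]
    rintro p (hp | rfl)
    exacts [hPAsep p hp, fun h ↦ (mem_sdiff.1 h.1).2 huA]

end

/-- Counterexample theorem: there are `c ∈ (0,1)`, `α ∈ [1/2,1)`,
`β > 0` and a family of weighted graphs satisfying the weighted `n^c`
edge separator theorem, with recursive separator partitions having
`O(log n)` regions (so average region size `Ω(n/log n)`) whose
inter-region weight is at least `W/2 = Θ(W)`; hence the bound
`O(W / r̄^(1-c))` with `r̄` the average region size fails. -/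
theorem stmt17 :
    ∃ c α β : ℝ, 0 < c ∧ c < 1 ∧ 1 / 2 ≤ α ∧ α < 1 ∧ 0 < β ∧
      ∃ d : ℝ, 0 < d ∧ ∀ C : ℝ, 0 < C →
        ∃ (n : ℕ) (w : Fin n → Fin n → ℝ) (P : Finset (Finset (Fin n))),
          (∀ a b, w a b = w b a) ∧ (∀ a b, 0 ≤ w a b) ∧
          SepThm w c α β ∧
          RecSep w c α β Finset.univ P ∧ P.Nonempty ∧
          (P.card : ℝ) ≤ d * Real.log n ∧
          totW w Finset.univ / 2 ≤
            totW w Finset.univ - ∑ p ∈ P, totW w p ∧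
          C * totW w Finset.univ / ((n : ℝ) / (P.card : ℝ)) ^ (1 - c) <
            totW w Finset.univ - ∑ p ∈ P, totW w p := by
  refine ⟨1 / 2, 2 / 3, 2, by norm_num, by norm_num, by norm_num, by norm_num, by norm_num,
    3, by norm_num, fun C hC ↦ ?_⟩
  obtain ⟨k, hk, hCk⟩ := exists_mul_succ_lt_two_pow (C ^ 2)
  have h1 : 1 < 2 ^ k := Nat.one_lt_two_pow (by omega)
  let u : Fin (2 ^ k) := ⟨0, by omega⟩
  let v : Fin (2 ^ k) := ⟨1, h1⟩
  have huv : u ≠ v := by simp [u, v, Fin.ext_iff]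
  obtain ⟨P, hP, hPcard, hPcut⟩ := exists_recSep_edgeWeight huv univ (mem_univ u) (mem_univ v)
  rw [card_univ, Fintype.card_fin, Nat.clog_pow 2 k one_lt_two] at hPcard
  have hW : totW (edgeWeight u v) univ = 1 := by simp [totW_edgeWeight]
  have hregions : ∑ p ∈ P, totW (edgeWeight u v) p = 0 :=
    sum_eq_zero fun p hp ↦ by simp [totW_edgeWeight, hPcut p hp]
  have hPpos : (0 : ℝ) < P.card := by exact_mod_cast hP.nonempty.card_pos
  have hPk : (P.card : ℝ) ≤ k + 1 := by exact_mod_cast hPcard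
  refine ⟨2 ^ k, edgeWeight u v, P, edgeWeight_comm u v, edgeWeight_nonneg u v,
    sepThm_edgeWeight huv, hP, hP.nonempty, ?_, ?_, ?_⟩
  · have := Real.log_two_gt_d9
    have : (1 : ℝ) ≤ k := by exact_mod_cast hk
    push_cast
    rw [Real.log_pow]
    nlinarith
  · rw [hW, hregions]; norm_num
  · rw [hW, hregions, mul_one, sub_zero, show (1 : ℝ) - 1 / 2 = 1 / 2 by norm_num,
      ← Real.sqrt_eq_rpow, div_lt_one (by positivity), Real.lt_sqrt hC.le,
      lt_div_iff₀ hPpos]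
    push_cast
    nlinarith
end
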